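/- arXiv:2012.13471 — 7 statements merged into one kernel-verified Lean document; each statement's English description precedes it below -/
import Mathlib

section
/- Let r, s be coprime integers with 0 ≤ s < r and let m be a positive rational number. A positive integer n belongs to N_{θ,m} if and only if there exist rational numbers x, y, z with y ≠ 0 such that y² = x·(x + 2n(r+s)/(m+1))·(x − 2n(r−s)/(m+1)) and z² = x⁴ + b₁x³ + b₂x² + b₃x + b₄, where b₁ = 8ns, b₂ = 8n²(2m²r² + 4s²m + 3s² − r²)/(m+1)², b₃ = −32n³s(r²−s²)/(m+1)², and b₄ = 16n⁴(r²−s²)²/(m+1)⁴. -/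
/-- A θ-parallelogram envelope for `n`, where `cos θ = s/r`. -/
def IsEnvelope (r s : ℤ) (n : ℕ) (a b c d e : ℚ) : Prop :=
  0 < a ∧ 0 < b ∧ 0 < c ∧ 0 < d ∧ 0 < e ∧
  a ^ 2 + b ^ 2 - (2 * (s : ℚ) / (r : ℚ)) * a * b = c ^ 2 ∧
  a ^ 2 + d ^ 2 + (2 * (s : ℚ) / (r : ℚ)) * a * d = e ^ 2 ∧
  a * (b + d) = (r : ℚ) * (n : ℚ)

/-!
Write `k = cos θ = s/r` and `t = ab = rn/(m+1)`. Putting `x = 2a(a + c - kb)`, the law of cosines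
`c² = a² + b² - 2kab` becomes `4a²x = P(x)` with `P(x) = (x + 2t(1+k))(x - 2t(1-k))`, so `y = 2ax`
is a point of the cubic `y² = x P(x)`; conversely `a = |y/(2x)|` and `b = t/a` are read off such a
point. Once `4a²x = P(x)`, the second diagonal satisfies
`16a²x²(a² + m²b² + 2kmab) = P(x)² + 8kmt x P(x) + 16m²t²x²`, which is the quartic, with `z = 4aex`.
Since `|k| < 1` both quadratic forms are positive definite, which makes `c` and `e` nonzero.
-/

namespace ParallelogramEnvelope

section Field

variable {K : Type*} [Field K]

def quadratic (k t x : K) : K := (x + 2 * t * (1 + k)) * (x - 2 * t * (1 - k))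

def quartic (k m t x : K) : K :=
  quadratic k t x ^ 2 + 8 * k * m * t * x * quadratic k t x + 16 * m ^ 2 * t ^ 2 * x ^ 2

theorem sq_eq_iff_quadratic_eq [CharZero K] {a b c k : K} (ha : a ≠ 0) :
    c ^ 2 = a ^ 2 + b ^ 2 - 2 * k * a * b ↔
      quadratic k (a * b) (2 * a * (a + c - k * b)) = 4 * a ^ 2 * (2 * a * (a + c - k * b)) := by
  have key : quadratic k (a * b) (2 * a * (a + c - k * b)) - 4 * a ^ 2 * (2 * a * (a + c - k * b))
      = 4 * a ^ 2 * (c ^ 2 - (a ^ 2 + b ^ 2 - 2 * k * a * b)) := by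
    unfold quadratic; ring
  rw [← sub_eq_zero (a := quadratic _ _ _), key, ← sub_eq_zero (a := c ^ 2)]
  simp [ha]

theorem quartic_eq_of_quadratic_eq {a b k m x : K}
    (h : quadratic k (a * b) x = 4 * a ^ 2 * x) :
    quartic k m (a * b) x = (4 * a * x) ^ 2 * (a ^ 2 + (m * b) ^ 2 + 2 * k * a * (m * b)) := by
  rw [quartic, h]; ring

theorem mul_quadratic_div_eq {r s n m : K} (hr : r ≠ 0) (hm : m + 1 ≠ 0) (x : K) :
    x * quadratic (s / r) (r * n / (m + 1)) x
      = x * (x + 2 * n * (r + s) / (m + 1)) * (x - 2 * n * (r - s) / (m + 1)) := by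
  unfold quadratic; field_simp

theorem quartic_div_eq {r s n m : K} (hr : r ≠ 0) (hm : m + 1 ≠ 0) (x : K) :
    quartic (s / r) m (r * n / (m + 1)) x
      = x ^ 4 + (8 * n * s) * x ^ 3 +
        (8 * n ^ 2 * (2 * m ^ 2 * r ^ 2 + 4 * s ^ 2 * m + 3 * s ^ 2 - r ^ 2) / (m + 1) ^ 2) * x ^ 2 +
        (-(32 * n ^ 3 * s * (r ^ 2 - s ^ 2)) / (m + 1) ^ 2) * x +
        16 * n ^ 4 * (r ^ 2 - s ^ 2) ^ 2 / (m + 1) ^ 4 := by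
  unfold quartic quadratic; field_simp; ring

end Field

section Ordered

variable {K : Type*} [Field K] [LinearOrder K] [IsStrictOrderedRing K]

theorem sq_add_sq_sub_two_mul_pos {k a : K} (hk : |k| < 1) (ha : a ≠ 0) (b : K) :
    0 < a ^ 2 + b ^ 2 - 2 * k * a * b := by
  have hk2 : k ^ 2 < 1 := (sq_lt_one_iff_abs_lt_one k).2 hk
  nlinarith [sq_nonneg (b - k * a), mul_pos (sub_pos.2 hk2) (sq_pos_iff.2 ha)]

theorem exists_curves_of_sq_eq {k m a b c e : K} (hk : |k| < 1) (ha : 0 < a) (hb : 0 < b)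
    (hc : c ^ 2 = a ^ 2 + b ^ 2 - 2 * k * a * b)
    (he : e ^ 2 = a ^ 2 + (m * b) ^ 2 + 2 * k * a * (m * b)) :
    ∃ x y z : K, y ≠ 0 ∧ y ^ 2 = x * quadratic k (a * b) x ∧ z ^ 2 = quartic k m (a * b) x := by
  have hP := (sq_eq_iff_quadratic_eq ha.ne').1 hc
  set x := 2 * a * (a + c - k * b)
  have hx : x ≠ 0 := by
    intro hx0
    have hk2 : k ^ 2 < 1 := (sq_lt_one_iff_abs_lt_one k).2 hk
    have h0 : (a * b) ^ 2 * (1 - k ^ 2) = 0 := by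
      rw [hx0, quadratic] at hP; linear_combination (-1 / 4 : K) * hP
    exact (mul_pos (pow_pos (mul_pos ha hb) 2) (sub_pos.2 hk2)).ne' h0
  refine ⟨x, 2 * a * x, 4 * a * e * x, mul_ne_zero (mul_ne_zero two_ne_zero ha.ne') hx, ?_, ?_⟩
  · rw [hP]; ring
  · rw [quartic_eq_of_quadratic_eq hP, ← he]; ring

theorem exists_sq_eq_of_curves {k m t x y z : K} (hk : |k| < 1) (ht : 0 < t) (hy : y ≠ 0)
    (hcubic : y ^ 2 = x * quadratic k t x) (hquartic : z ^ 2 = quartic k m t x) :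
    ∃ a b c e : K, 0 < a ∧ 0 < b ∧ 0 < c ∧ 0 < e ∧ c ^ 2 = a ^ 2 + b ^ 2 - 2 * k * a * b ∧
      e ^ 2 = a ^ 2 + (m * b) ^ 2 + 2 * k * a * (m * b) ∧ a * b = t := by
  have hx : x ≠ 0 := by
    rintro rfl
    exact hy (pow_eq_zero_iff two_ne_zero |>.1 (by simpa using hcubic))
  set a := |y / (2 * x)|
  have ha : 0 < a := abs_pos.2 (div_ne_zero hy (mul_ne_zero two_ne_zero hx))
  set b := t / a
  have hb : 0 < b := div_pos ht ha
  have hab : a * b = t := mul_div_cancel₀ t ha.ne'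
  have hP : quadratic k (a * b) x = 4 * a ^ 2 * x := by
    have hy2 : y ^ 2 = 4 * a ^ 2 * x ^ 2 := by
      rw [sq_abs, div_pow]; field_simp; ring
    apply mul_left_cancel₀ hx
    rw [hab]; linear_combination hy2 - hcubic
  set c := x / (2 * a) - a + k * b
  have hxc : 2 * a * (a + c - k * b) = x := by simp only [c]; field_simp; ring
  have hc : c ^ 2 = a ^ 2 + b ^ 2 - 2 * k * a * b :=
    (sq_eq_iff_quadratic_eq ha.ne').2 (by rw [hxc]; exact hP)
  set e := z / (4 * a * x)
  have he : e ^ 2 = a ^ 2 + (m * b) ^ 2 + 2 * k * a * (m * b) := by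
    rw [div_pow, hquartic, ← hab, quartic_eq_of_quadratic_eq hP]
    field_simp
  have hc0 : 0 < c ^ 2 := hc ▸ sq_add_sq_sub_two_mul_pos hk ha.ne' b
  have he0 : 0 < e ^ 2 := by
    have := sq_add_sq_sub_two_mul_pos (k := -k) (by rwa [abs_neg]) ha.ne' (m * b)
    linarith
  exact ⟨a, b, |c|, |e|, ha, hb, abs_pos.2 (sq_pos_iff.1 hc0), abs_pos.2 (sq_pos_iff.1 he0),
    by rw [sq_abs, hc], by rw [sq_abs, he], hab⟩

end Ordered

end ParallelogramEnvelope

open ParallelogramEnvelope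

theorem exists_isEnvelope_mul_iff {r s : ℤ} {n : ℕ} {m : ℚ} (hm : 0 < m) :
    (∃ a b c d e : ℚ, IsEnvelope r s n a b c d e ∧ d = m * b) ↔
      ∃ a b c e : ℚ, 0 < a ∧ 0 < b ∧ 0 < c ∧ 0 < e ∧
        c ^ 2 = a ^ 2 + b ^ 2 - 2 * (s / r) * a * b ∧
        e ^ 2 = a ^ 2 + (m * b) ^ 2 + 2 * (s / r) * a * (m * b) ∧ a * b = r * n / (m + 1) := by
  have hm1 : m + 1 ≠ 0 := by positivity
  constructor
  · rintro ⟨a, b, c, _, e, ⟨ha, hb, hc, -, he, hcos, hcos', hsum⟩, rfl⟩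
    refine ⟨a, b, c, e, ha, hb, hc, he, by linear_combination -hcos, by linear_combination -hcos', ?_⟩
    rw [eq_div_iff hm1]; linear_combination hsum
  · rintro ⟨a, b, c, e, ha, hb, hc, he, hcos, hcos', hab⟩
    refine ⟨a, b, c, m * b, e, ⟨ha, hb, hc, by positivity, he, by linear_combination -hcos,
      by linear_combination -hcos', ?_⟩, rfl⟩
    rw [eq_div_iff hm1] at hab; linear_combination hab

theorem stmt_4_general (r s : ℤ) (hs : 0 ≤ s) (hsr : s < r)
    (m : ℚ) (hm : 0 < m) (n : ℕ) (hn : 0 < n) :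
    (∃ a b c d e : ℚ, IsEnvelope r s n a b c d e ∧ d = m * b) ↔
    ∃ x y z : ℚ, y ≠ 0 ∧
      y ^ 2 = x * (x + 2 * (n : ℚ) * ((r : ℚ) + (s : ℚ)) / (m + 1)) *
        (x - 2 * (n : ℚ) * ((r : ℚ) - (s : ℚ)) / (m + 1)) ∧
      z ^ 2 = x ^ 4 + (8 * (n : ℚ) * (s : ℚ)) * x ^ 3 +
        (8 * (n : ℚ) ^ 2 * (2 * m ^ 2 * (r : ℚ) ^ 2 + 4 * (s : ℚ) ^ 2 * m +
          3 * (s : ℚ) ^ 2 - (r : ℚ) ^ 2) / (m + 1) ^ 2) * x ^ 2 +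
        (-(32 * (n : ℚ) ^ 3 * (s : ℚ) * ((r : ℚ) ^ 2 - (s : ℚ) ^ 2)) / (m + 1) ^ 2) * x +
        16 * (n : ℚ) ^ 4 * ((r : ℚ) ^ 2 - (s : ℚ) ^ 2) ^ 2 / (m + 1) ^ 4 := by
  have hs' : (0 : ℚ) ≤ s := by exact_mod_cast hs
  have hsr' : (s : ℚ) < r := by exact_mod_cast hsr
  have hr : (0 : ℚ) < r := hs'.trans_lt hsr'
  have hm1 : m + 1 ≠ 0 := by positivity
  have hk : |(s / r : ℚ)| < 1 := by
    rw [abs_lt, lt_div_iff₀ hr, div_lt_one hr]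
    constructor <;> linarith
  have ht : (0 : ℚ) < r * n / (m + 1) := by positivity
  simp only [← mul_quadratic_div_eq hr.ne' hm1, ← quartic_div_eq hr.ne' hm1,
    exists_isEnvelope_mul_iff hm]
  constructor
  · rintro ⟨a, b, c, e, ha, hb, -, -, hc, he, hab⟩
    exact hab ▸ exists_curves_of_sq_eq hk ha hb hc he
  · rintro ⟨x, y, z, hy, hcubic, hquartic⟩
    exact exists_sq_eq_of_curves hk ht hy hcubic hquartic

theorem stmt_4 (r s : ℤ) (hrs : IsCoprime r s) (hs : 0 ≤ s) (hsr : s < r)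
    (m : ℚ) (hm : 0 < m) (n : ℕ) (hn : 0 < n) :
    (∃ a b c d e : ℚ, IsEnvelope r s n a b c d e ∧ d = m * b) ↔
    ∃ x y z : ℚ, y ≠ 0 ∧
      y ^ 2 = x * (x + 2 * (n : ℚ) * ((r : ℚ) + (s : ℚ)) / (m + 1)) *
        (x - 2 * (n : ℚ) * ((r : ℚ) - (s : ℚ)) / (m + 1)) ∧
      z ^ 2 = x ^ 4 + (8 * (n : ℚ) * (s : ℚ)) * x ^ 3 +
        (8 * (n : ℚ) ^ 2 * (2 * m ^ 2 * (r : ℚ) ^ 2 + 4 * (s : ℚ) ^ 2 * m +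
          3 * (s : ℚ) ^ 2 - (r : ℚ) ^ 2) / (m + 1) ^ 2) * x ^ 2 +
        (-(32 * (n : ℚ) ^ 3 * (s : ℚ) * ((r : ℚ) ^ 2 - (s : ℚ) ^ 2)) / (m + 1) ^ 2) * x +
        16 * (n : ℚ) ^ 4 * ((r : ℚ) ^ 2 - (s : ℚ) ^ 2) ^ 2 / (m + 1) ^ 4 :=
  stmt_4_general r s hs hsr m hm n hn
end

section
/- Let r, s be coprime integers with 0 ≤ s < r and let m be a positive rational number with not (s = 0 and m = 1). Then T = (m(r²−s²), r(r²−s²)m(m+1)) is a rational point on G_θ^m of exact additive order 4 in the group G_θ^m(ℚ), and likewise −T has order 4. -/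
/-!
On `Y² = X³ + aX² + bX` the point `(0, 0)` has order two, and a point `(x, y)` with `y ≠ 0`
and `x² = b` doubles to it: then `y² = x²(2x + a)`, so the tangent at `(x, y)` is the line
`Y = (y / x) X` through the origin, which it meets doubly at `(x, y)` and simply at `(0, 0)`.
Hence `(x, y)` has order four. For `T` on `G_θ^m` one has `x² = m²(r² − s²)² = b`, and
`y ≠ 0` because `r > s ≥ 0` and `m > 0`.
-/

/-- The elliptic curve `G_θ^m : Y² = X³ + (r²m² + 2s²m + r²)X² + m²(r²−s²)²X`. -/
noncomputable def Gcurve (r s : ℤ) (m : ℚ) : WeierstrassCurve.Affine ℚ :=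
  { a₁ := 0
    a₂ := (r : ℚ) ^ 2 * m ^ 2 + 2 * (s : ℚ) ^ 2 * m + (r : ℚ) ^ 2
    a₃ := 0
    a₄ := m ^ 2 * ((r : ℚ) ^ 2 - (s : ℚ) ^ 2) ^ 2
    a₆ := 0 }

theorem addOrderOf_eq_four_of_add_self {G : Type*} [AddMonoid G] {P Q : G} (hPQ : P + P = Q)
    (hQ : Q ≠ 0) (hQQ : Q + Q = 0) : addOrderOf P = 4 := by
  have : Fact (Nat.Prime 2) := ⟨Nat.prime_two⟩
  refine addOrderOf_eq_prime_pow (p := 2) (n := 1) ?_ ?_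
  · simpa [two_nsmul, hPQ] using hQ
  · rw [pow_succ, pow_one, mul_nsmul, two_nsmul P, hPQ, two_nsmul, hQQ]

namespace WeierstrassCurve.Affine

variable {F : Type*} [Field F] {W : WeierstrassCurve.Affine F}

lemma nonsingular_of_Y_ne_negY {x y : F} (h : W.Equation x y) (hy : y ≠ W.negY x y) :
    W.Nonsingular x y :=
  (W.nonsingular_iff x y).mpr ⟨h, Or.inr hy⟩

lemma X_ne_zero_of_Y_ne_negY (ha₃ : W.a₃ = 0) (ha₆ : W.a₆ = 0) {x y : F} (h : W.Equation x y)
    (hy : y ≠ W.negY x y) : x ≠ 0 := by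
  rintro rfl
  have hy0 : y = 0 := by simpa [equation_iff, ha₃, ha₆] using h
  exact hy (by simp [negY, hy0, ha₃])

variable [DecidableEq F]

lemma addX_addY_self_eq_zero_of_sq_eq_a₄ (ha₁ : W.a₁ = 0) (ha₃ : W.a₃ = 0) (ha₆ : W.a₆ = 0)
    {x y : F} (h : W.Equation x y) (hy : y ≠ W.negY x y) (hx : x ^ 2 = W.a₄) :
    W.addX x x (W.slope x x y y) = 0 ∧ W.addY x x y (W.slope x x y y) = 0 := by
  have hx0 := X_ne_zero_of_Y_ne_negY ha₃ ha₆ h hy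
  rw [equation_iff, ha₁, ha₃, ha₆] at h
  have hy2 : y ^ 2 = x ^ 2 * (2 * x + W.a₂) := by linear_combination h - x * hx
  have hℓ : W.slope x x y y = y / x := by
    rw [slope_of_Y_ne rfl hy, div_eq_div_iff (sub_ne_zero.mpr hy) hx0]
    simp only [negY, ha₁, ha₃, ← hx]
    linear_combination (-2) * hy2
  have hX : W.addX x x (W.slope x x y y) = 0 := by
    rw [addX, hℓ, ha₁, div_pow, hy2, mul_div_cancel_left₀ _ (pow_ne_zero 2 hx0)]
    ring
  refine ⟨hX, ?_⟩
  rw [addY, negAddY, hX, hℓ, negY, ha₁, ha₃]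
  field_simp
  ring

namespace Point

lemma some_zero_zero_add_self (ha₃ : W.a₃ = 0) {h₀ : W.Nonsingular 0 0} :
    some 0 0 h₀ + some 0 0 h₀ = 0 :=
  add_self_of_Y_eq (by simp [negY, ha₃])

lemma some_add_self_eq_some_zero_zero (ha₁ : W.a₁ = 0) (ha₃ : W.a₃ = 0) (ha₆ : W.a₆ = 0)
    {x y : F} {h : W.Nonsingular x y} (hy : y ≠ W.negY x y) (hx : x ^ 2 = W.a₄)
    {h₀ : W.Nonsingular 0 0} : some x y h + some x y h = some 0 0 h₀ := by
  obtain ⟨hX, hY⟩ := addX_addY_self_eq_zero_of_sq_eq_a₄ ha₁ ha₃ ha₆ h.1 hy hx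
  rw [add_self_of_Y_ne hy]
  simp only [some.injEq]
  exact ⟨hX, hY⟩

lemma addOrderOf_some_eq_four (ha₁ : W.a₁ = 0) (ha₃ : W.a₃ = 0) (ha₆ : W.a₆ = 0)
    {x y : F} {h : W.Nonsingular x y} (hy : y ≠ W.negY x y) (hx : x ^ 2 = W.a₄) :
    addOrderOf (some x y h) = 4 := by
  have h₀ : W.Nonsingular 0 0 :=
    nonsingular_zero.mpr ⟨ha₆, .inr (hx ▸ pow_ne_zero 2 (X_ne_zero_of_Y_ne_negY ha₃ ha₆ h.1 hy))⟩
  exact addOrderOf_eq_four_of_add_self (some_add_self_eq_some_zero_zero ha₁ ha₃ ha₆ hy hx)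
    (some_ne_zero h₀) (some_zero_zero_add_self ha₃)

end Point

end WeierstrassCurve.Affine

theorem stmt_6_general (r s : ℤ) (hs : 0 ≤ s) (hsr : s < r)
    (m : ℚ) (hm : 0 < m) :
    ∃ h : (Gcurve r s m).Nonsingular (m * ((r : ℚ) ^ 2 - (s : ℚ) ^ 2))
        ((r : ℚ) * ((r : ℚ) ^ 2 - (s : ℚ) ^ 2) * m * (m + 1)),
      addOrderOf (WeierstrassCurve.Affine.Point.some (h := h)) = 4 ∧
      addOrderOf (-WeierstrassCurve.Affine.Point.some (h := h)) = 4 := by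
  have hs' : (0 : ℚ) ≤ s := by exact_mod_cast hs
  have hsr' : (s : ℚ) < r := by exact_mod_cast hsr
  have hr : (0 : ℚ) < r := by linarith
  have hd : 0 < (r : ℚ) ^ 2 - (s : ℚ) ^ 2 := by nlinarith
  set x := m * ((r : ℚ) ^ 2 - (s : ℚ) ^ 2)
  set y := (r : ℚ) * ((r : ℚ) ^ 2 - (s : ℚ) ^ 2) * m * (m + 1)
  have hy : y ≠ (Gcurve r s m).negY x y := by
    have : 0 < y := by positivity
    simp only [WeierstrassCurve.Affine.negY, Gcurve]
    linarith
  have heq : (Gcurve r s m).Equation x y := by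
    rw [WeierstrassCurve.Affine.equation_iff]
    simp only [Gcurve, x, y]
    ring
  have hord := WeierstrassCurve.Affine.Point.addOrderOf_some_eq_four rfl rfl rfl
    (h := WeierstrassCurve.Affine.nonsingular_of_Y_ne_negY heq hy) hy (by simp only [Gcurve, x]; ring)
  exact ⟨_, hord, by rwa [addOrderOf_neg]⟩

theorem stmt_6 (r s : ℤ) (hrs : IsCoprime r s) (hs : 0 ≤ s) (hsr : s < r)
    (m : ℚ) (hm : 0 < m) (hnd : ¬(s = 0 ∧ m = 1)) :
    ∃ h : (Gcurve r s m).Nonsingular (m * ((r : ℚ) ^ 2 - (s : ℚ) ^ 2))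
        ((r : ℚ) * ((r : ℚ) ^ 2 - (s : ℚ) ^ 2) * m * (m + 1)),
      addOrderOf (WeierstrassCurve.Affine.Point.some (h := h)) = 4 ∧
      addOrderOf (-WeierstrassCurve.Affine.Point.some (h := h)) = 4 :=
  stmt_6_general r s hs hsr m hm
end

section
/- Let r, s be coprime integers with 0 ≤ s < r and let m be a positive rational number with not (s = 0 and m = 1). Set M₀ = m(r²−s²) and suppose M₀ = u² with u a positive rational number, and suppose M₁ = r(m+1)(r(m+1) + 2u) = w² with w a nonnegative rational number. Then X₁ = M₀ + (r(m+1) + w)·u is the X-coordinate of a rational point on G_θ^m, and every rational point on G_θ^m with X-coordinate X₁ has exact additive order 8 in G_θ^m(ℚ). -/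
/-! On `Y² = X(X² + aX + u⁴)` doubling acts on `X`-coordinates by `X ↦ (X² − u⁴)² / (2Y)²`, so
a point with `X = u²` doubles to the `2`-torsion point `(0, 0)`. For `G_θ^m` we have
`u⁴ = m²(r² − s²)²` and `a + 2u² = R²` with `R = r(m + 1)`. The classical halving formula
`X₀ + √(X₀ − e₁)√(X₀ − e₂) + √(X₀ − e₁)√(X₀ − e₃) + √(X₀ − e₂)√(X₀ − e₃)` for the roots `eᵢ` of
the cubic, at `X₀ = u²` and `e₁ = 0`, produces `u² + (R + w)u` when `R(R + 2u) = w²`; that point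
then has order `8`. It is nonsingular simply because its `Y`-coordinate is nonzero. -/

lemma addOrderOf_eq_eight_of_two_nsmul {G : Type*} [AddMonoid G] {P : G}
    (h8 : 2 • 2 • 2 • P = 0) (h4 : 2 • 2 • P ≠ 0) : addOrderOf P = 8 := by
  simpa using addOrderOf_eq_prime_pow (p := 2) (n := 2) (x := P)
    (by rwa [pow_two, mul_nsmul]) (by rwa [pow_succ, pow_two, mul_nsmul, mul_nsmul])

namespace WeierstrassCurve.Affine

open Point

variable {F : Type*} [Field F] {W : Affine F} [W.IsCharNeTwoNF] {u R w : F}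

lemma negY_of_isCharNeTwoNF (x y : F) : W.negY x y = -y := by
  simp [negY]

lemma equation_iff_sq_eq (ha₆ : W.a₆ = 0) (ha₄ : W.a₄ = u ^ 4) (ha₂ : W.a₂ + 2 * u ^ 2 = R ^ 2)
    (hw : R * (R + 2 * u) = w ^ 2) {y : F} :
    W.Equation (u ^ 2 + (R + w) * u) y ↔ y ^ 2 = ((u ^ 2 + (R + w) * u) * w) ^ 2 := by
  rw [equation_iff, a₁_of_isCharNeTwoNF, a₃_of_isCharNeTwoNF, ha₆, ha₄,
    eq_sub_of_add_eq ha₂]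
  constructor <;> intro h
  · linear_combination h + (u ^ 2 + (R + w) * u) * (R + w) * u * hw
  · linear_combination h - (u ^ 2 + (R + w) * u) * (R + w) * u * hw

section NeZeroTwo

variable [NeZero (2 : F)]

lemma nonsingular_of_equation_of_Y_ne_zero {x y : F} (h : W.Equation x y) (hy : y ≠ 0) :
    W.Nonsingular x y := by
  rw [nonsingular_iff']
  simp [h, hy, NeZero.ne]

lemma Y_ne_negY_of_Y_ne_zero {x y : F} (hy : y ≠ 0) : y ≠ W.negY x y := by
  rw [negY_of_isCharNeTwoNF]
  intro h
  have h2y : 2 * y = 0 := by linear_combination h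
  exact hy ((mul_eq_zero.1 h2y).resolve_left two_ne_zero)

end NeZeroTwo

variable [DecidableEq F]

lemma two_nsmul_some_eq_zero_of_X_eq_zero (ha₆ : W.a₆ = 0) {y : F} (h : W.Nonsingular 0 y) :
    2 • some _ _ h = 0 := by
  have hy : y = 0 := by simpa [equation_iff, ha₆] using h.1
  rw [two_nsmul, add_self_of_Y_eq (by rw [negY_of_isCharNeTwoNF, hy, _root_.neg_zero])]

variable [NeZero (2 : F)]

lemma addX_slope_self (ha₆ : W.a₆ = 0) {x y : F} (h : W.Equation x y) (hy : y ≠ 0) :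
    W.addX x x (W.slope x x y y) = (x ^ 2 - W.a₄) ^ 2 / (2 * y) ^ 2 := by
  rw [equation_iff, a₁_of_isCharNeTwoNF, a₃_of_isCharNeTwoNF, ha₆] at h
  have h2y : (2 : F) * y ≠ 0 := mul_ne_zero two_ne_zero hy
  rw [slope_of_Y_ne rfl (Y_ne_negY_of_Y_ne_zero hy), negY_of_isCharNeTwoNF, sub_neg_eq_add,
    ← two_mul]
  simp only [addX, a₁_of_isCharNeTwoNF]
  field_simp
  linear_combination (-4 * (W.a₂ + 2 * x)) * h

lemma exists_two_nsmul_some_eq_some (ha₆ : W.a₆ = 0) {x y x' : F} (h : W.Nonsingular x y)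
    (hy : y ≠ 0) (hx' : (x ^ 2 - W.a₄) ^ 2 = (2 * y) ^ 2 * x') :
    ∃ (y' : F) (h' : W.Nonsingular x' y'), 2 • some _ _ h = some _ _ h' := by
  obtain rfl : W.addX x x (W.slope x x y y) = x' := by
    rw [addX_slope_self ha₆ h.1 hy, hx', mul_div_cancel_left₀ _ (by simp [hy, NeZero.ne])]
  exact ⟨_, _, (two_nsmul _).trans (add_self_of_Y_ne (Y_ne_negY_of_Y_ne_zero hy))⟩

lemma exists_two_nsmul_some_eq_some_zero (ha₆ : W.a₆ = 0) (ha₄ : W.a₄ = u ^ 4)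
    (ha₂ : W.a₂ + 2 * u ^ 2 = R ^ 2) (hu : u ≠ 0) (hR : R ≠ 0) {y : F}
    (h : W.Nonsingular (u ^ 2) y) :
    ∃ (y' : F) (h' : W.Nonsingular 0 y'), 2 • some _ _ h = some _ _ h' := by
  have hy : y ^ 2 = (u ^ 2 * R) ^ 2 := by
    have := h.1
    rw [equation_iff, a₁_of_isCharNeTwoNF, a₃_of_isCharNeTwoNF, ha₆, ha₄] at this
    linear_combination this + u ^ 4 * ha₂
  refine exists_two_nsmul_some_eq_some ha₆ h ?_ (by rw [ha₄]; ring)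
  rintro rfl
  simpa [hu, hR] using hy.symm

lemma exists_two_nsmul_some_eq_some_sq (ha₆ : W.a₆ = 0) (ha₄ : W.a₄ = u ^ 4)
    (ha₂ : W.a₂ + 2 * u ^ 2 = R ^ 2) (hw : R * (R + 2 * u) = w ^ 2)
    (hxw : (u ^ 2 + (R + w) * u) * w ≠ 0) {y : F} (h : W.Nonsingular (u ^ 2 + (R + w) * u) y) :
    ∃ (y' : F) (h' : W.Nonsingular (u ^ 2) y'), 2 • some _ _ h = some _ _ h' := by
  have hy := (equation_iff_sq_eq ha₆ ha₄ ha₂ hw).1 h.1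
  refine exists_two_nsmul_some_eq_some ha₆ h ?_ ?_
  · rintro rfl
    exact hxw (by simpa using hy.symm)
  · rw [ha₄]
    linear_combination u ^ 2 * ((u ^ 2 + (R + w) * u) ^ 2 - u ^ 4
      + 2 * u * (u ^ 2 + (R + w) * u) * w) * hw - 4 * u ^ 2 * hy

theorem addOrderOf_some_eq_eight (ha₆ : W.a₆ = 0) (ha₄ : W.a₄ = u ^ 4)
    (ha₂ : W.a₂ + 2 * u ^ 2 = R ^ 2) (hw : R * (R + 2 * u) = w ^ 2) (hu : u ≠ 0) (hR : R ≠ 0)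
    (hxw : (u ^ 2 + (R + w) * u) * w ≠ 0) {y : F} (h : W.Nonsingular (u ^ 2 + (R + w) * u) y) :
    addOrderOf (some _ _ h) = 8 := by
  obtain ⟨y₂, h₂, e₂⟩ := exists_two_nsmul_some_eq_some_sq ha₆ ha₄ ha₂ hw hxw h
  obtain ⟨y₄, h₄, e₄⟩ := exists_two_nsmul_some_eq_some_zero ha₆ ha₄ ha₂ hu hR h₂
  refine addOrderOf_eq_eight_of_two_nsmul ?_ ?_
  · rw [e₂, e₄, two_nsmul_some_eq_zero_of_X_eq_zero ha₆]
  · rw [e₂, e₄]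
    exact some_ne_zero h₄

end WeierstrassCurve.Affine

instance Gcurve.isCharNeTwoNF (r s : ℤ) (m : ℚ) : (Gcurve r s m).IsCharNeTwoNF :=
  ⟨rfl, rfl⟩

open WeierstrassCurve.Affine in
theorem stmt_9_general (r s : ℤ) (hs : 0 ≤ s) (hsr : s < r)
    (m : ℚ) (hm : 0 < m)
    (u : ℚ) (hu : 0 < u) (hu2 : m * ((r : ℚ) ^ 2 - (s : ℚ) ^ 2) = u ^ 2)
    (w : ℚ) (hw : 0 ≤ w)
    (hw2 : (r : ℚ) * (m + 1) * ((r : ℚ) * (m + 1) + 2 * u) = w ^ 2) :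
    (∃ Y : ℚ,
      (Gcurve r s m).Nonsingular (m * ((r : ℚ) ^ 2 - (s : ℚ) ^ 2) + ((r : ℚ) * (m + 1) + w) * u) Y) ∧
    ∀ (Y : ℚ)
      (h : (Gcurve r s m).Nonsingular
        (m * ((r : ℚ) ^ 2 - (s : ℚ) ^ 2) + ((r : ℚ) * (m + 1) + w) * u) Y),
      addOrderOf (WeierstrassCurve.Affine.Point.some _ _ h) = 8 := by
  have hr : (0 : ℚ) < r := by exact_mod_cast hs.trans_lt hsr
  set R : ℚ := r * (m + 1)
  have hR : 0 < R := mul_pos hr (by linarith)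
  have ha₄ : (Gcurve r s m).a₄ = u ^ 4 := by
    simp only [Gcurve]
    linear_combination (m * ((r : ℚ) ^ 2 - (s : ℚ) ^ 2) + u ^ 2) * hu2
  have ha₂ : (Gcurve r s m).a₂ + 2 * u ^ 2 = R ^ 2 := by
    simp only [Gcurve, R]
    linear_combination (-2) * hu2
  have hw0 : 0 < w := hw.lt_of_ne' fun h0 => by nlinarith
  have hxw : (u ^ 2 + (R + w) * u) * w ≠ 0 := by positivity
  rw [hu2]
  exact ⟨⟨_, nonsingular_of_equation_of_Y_ne_zero
      ((equation_iff_sq_eq rfl ha₄ ha₂ hw2).2 rfl) hxw⟩,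
    fun Y h => addOrderOf_some_eq_eight rfl ha₄ ha₂ hw2 hu.ne' hR.ne' hxw h⟩

theorem stmt_9 (r s : ℤ) (hrs : IsCoprime r s) (hs : 0 ≤ s) (hsr : s < r)
    (m : ℚ) (hm : 0 < m) (hnd : ¬(s = 0 ∧ m = 1))
    (u : ℚ) (hu : 0 < u) (hu2 : m * ((r : ℚ) ^ 2 - (s : ℚ) ^ 2) = u ^ 2)
    (w : ℚ) (hw : 0 ≤ w)
    (hw2 : (r : ℚ) * (m + 1) * ((r : ℚ) * (m + 1) + 2 * u) = w ^ 2) :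
    (∃ Y : ℚ,
      (Gcurve r s m).Nonsingular (m * ((r : ℚ) ^ 2 - (s : ℚ) ^ 2) + ((r : ℚ) * (m + 1) + w) * u) Y) ∧
    ∀ (Y : ℚ)
      (h : (Gcurve r s m).Nonsingular
        (m * ((r : ℚ) ^ 2 - (s : ℚ) ^ 2) + ((r : ℚ) * (m + 1) + w) * u) Y),
      addOrderOf (WeierstrassCurve.Affine.Point.some _ _ h) = 8 :=
  stmt_9_general r s hs hsr m hm u hu hu2 w hw hw2
end

section
/- Let r, s be coprime integers with 0 ≤ s < r and suppose θ is a Pythagorean angle, i.e., r² − s² = t² for some positive integer t. Then N_θ = ℕ: every positive integer n admits a θ-parallelogram envelope, i.e., there exist positive rational numbers a, b, c, d, e with a² + b² − (2s/r)ab = c², a² + d² + (2s/r)ad = e², and a(b+d) = r·n. -/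
theorem Rat.exists_pos_sq_mem_Ioo {x y : ℚ} (hx : 0 ≤ x) (hxy : x < y) :
    ∃ l : ℚ, 0 < l ∧ x < l ^ 2 ∧ l ^ 2 < y := by
  have hsqrt : √(x : ℝ) < √(y : ℝ) :=
    Real.sqrt_lt_sqrt (by exact_mod_cast hx) (by exact_mod_cast hxy)
  obtain ⟨l, hxl, hly⟩ := exists_rat_btwn hsqrt
  have hl : (0 : ℝ) < l := (Real.sqrt_nonneg _).trans_lt hxl
  refine ⟨l, by exact_mod_cast hl, ?_, ?_⟩
  · exact_mod_cast (Real.sqrt_lt' hl).1 hxl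
  · exact_mod_cast (Real.lt_sqrt hl.le).1 hly

section HalfSubInv

variable {K : Type*} [Field K]

theorem one_add_sq_half_sub_inv [NeZero (2 : K)] {x : K} (hx : x ≠ 0) :
    1 + ((x - x⁻¹) / 2) ^ 2 = ((x + x⁻¹) / 2) ^ 2 := by
  field_simp
  ring

theorem lt_half_sub_inv [LinearOrder K] [IsStrictOrderedRing K] {k y : K} (hk : 0 ≤ k)
    (hy : 2 * k + 1 < y) : k < (y - y⁻¹) / 2 := by
  have : y⁻¹ < 1 := inv_lt_one_of_one_lt₀ (by linarith)
  linarith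

theorem sq_add_sq_sub_mul_eq {r s t : K} (hr : r ≠ 0) (ht : t ≠ 0)
    (h : r ^ 2 - s ^ 2 = t ^ 2) (p β : K) :
    (p * r / t) ^ 2 + (p * (β + s / t)) ^ 2 - 2 * s / r * (p * r / t) * (p * (β + s / t)) =
      p ^ 2 * (1 + β ^ 2) := by
  field_simp
  linear_combination p ^ 2 * h

theorem sq_mul_half_sub_inv_add_half_sub_inv [LinearOrder K] [IsStrictOrderedRing K] {m : K}
    (hm : 0 ≤ m) :
    (2 * (m + 1) / (m ^ 2 + 4 * m + 5)) ^ 2 *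
        ((m + 2 - (m + 2)⁻¹) / 2 + ((m + 1) ^ 2 / 2 - ((m + 1) ^ 2 / 2)⁻¹) / 2) =
      m / (m + 2) := by
  have : m ^ 2 + 4 * m + 5 ≠ 0 := by positivity
  field_simp
  ring

end HalfSubInv

theorem exists_parallelogram_envelope {r s t : ℚ} (hr : 0 < r) (ht : 0 < t)
    (h : r ^ 2 - s ^ 2 = t ^ 2) {n : ℚ} (hn : 0 < n) :
    ∃ a b c d e : ℚ, 0 < a ∧ 0 < b ∧ 0 < c ∧ 0 < d ∧ 0 < e ∧
      a ^ 2 + b ^ 2 - (2 * s / r) * a * b = c ^ 2 ∧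
      a ^ 2 + d ^ 2 + (2 * s / r) * a * d = e ^ 2 ∧
      a * (b + d) = r * n := by
  set N := t * n
  set k := |s / t|
  have hN : 0 < N := mul_pos ht hn
  obtain ⟨l, hl, hNl, hlN⟩ := Rat.exists_pos_sq_mem_Ioo hN.le
    (lt_add_of_pos_right N (div_pos hN (by positivity : 0 < 2 * k + 1)))
  set m := 2 * N / (l ^ 2 - N)
  have hε : 0 < l ^ 2 - N := sub_pos.2 hNl
  have hm : 4 * k + 2 < m := by
    have : (l ^ 2 - N) * (2 * k + 1) < N :=
      (lt_div_iff₀ (by positivity)).1 (by linarith)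
    rw [lt_div_iff₀ hε]
    linarith
  have hm0 : 0 ≤ m := by linarith [(by positivity : 0 ≤ k)]
  have hmN : m / (m + 2) = N / l ^ 2 := by
    rw [div_eq_div_iff (by positivity) (by positivity)]
    unfold m
    field_simp
    ring
  set x := m + 2
  set y := (m + 1) ^ 2 / 2
  set p := 2 * l * (m + 1) / (m ^ 2 + 4 * m + 5)
  have hp : 0 < p := by positivity
  have hsum : p ^ 2 * ((x - x⁻¹) / 2 + (y - y⁻¹) / 2) = N := by
    calc p ^ 2 * ((x - x⁻¹) / 2 + (y - y⁻¹) / 2)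
        = l ^ 2 * (m / (m + 2)) := by
          rw [← sq_mul_half_sub_inv_add_half_sub_inv hm0]; ring
      _ = N := by rw [hmN]; field_simp
  have hx : k < (x - x⁻¹) / 2 := lt_half_sub_inv (abs_nonneg _) (by linarith)
  have hy : k < (y - y⁻¹) / 2 := lt_half_sub_inv (abs_nonneg _) (by simp only [y]; nlinarith)
  have hx0 : 0 < x := by positivity
  have hy0 : 0 < y := by positivity
  refine ⟨p * r / t, p * ((x - x⁻¹) / 2 + s / t), p * ((x + x⁻¹) / 2),
    p * ((y - y⁻¹) / 2 - s / t), p * ((y + y⁻¹) / 2), by positivity, ?_, by positivity, ?_,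
    by positivity, ?_, ?_, ?_⟩
  · exact mul_pos hp (by linarith [neg_abs_le (s / t)])
  · exact mul_pos hp (by linarith [le_abs_self (s / t)])
  · rw [sq_add_sq_sub_mul_eq hr.ne' ht.ne' h, mul_pow, one_add_sq_half_sub_inv hx0.ne']
  · linear_combination
      sq_add_sq_sub_mul_eq (s := -s) hr.ne' ht.ne' (by linear_combination h) p ((y - y⁻¹) / 2) +
        p ^ 2 * one_add_sq_half_sub_inv hy0.ne'
  · calc p * r / t * (p * ((x - x⁻¹) / 2 + s / t) + p * ((y - y⁻¹) / 2 - s / t))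
        = r / t * (p ^ 2 * ((x - x⁻¹) / 2 + (y - y⁻¹) / 2)) := by ring
      _ = r / t * (t * n) := by rw [hsum]
      _ = r * n := by field_simp

theorem stmt_15_general (r s : ℤ) (hsr : s < r)
    (t : ℕ) (ht : 0 < t) (hpyth : r ^ 2 - s ^ 2 = (t : ℤ) ^ 2) :
    ∀ n : ℕ, 0 < n → ∃ a b c d e : ℚ, IsEnvelope r s n a b c d e := by
  intro n hn
  have hr : 0 < r := by nlinarith
  exact exists_parallelogram_envelope (r := r) (s := s) (t := t) (n := n)
    (by exact_mod_cast hr) (by exact_mod_cast ht) (by exact_mod_cast hpyth) (by exact_mod_cast hn)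

theorem stmt_15 (r s : ℤ) (hrs : IsCoprime r s) (hs : 0 ≤ s) (hsr : s < r)
    (t : ℕ) (ht : 0 < t) (hpyth : r ^ 2 - s ^ 2 = (t : ℤ) ^ 2) :
    ∀ n : ℕ, 0 < n → ∃ a b c d e : ℚ, IsEnvelope r s n a b c d e :=
  stmt_15_general r s hsr t ht hpyth
end

section
/- Let r, s be coprime integers with 0 ≤ s < r and suppose θ is a Pythagorean angle, i.e., r² − s² = t² for some positive integer t. Then for every positive integer n, the set of θ-parallelogram envelopes for n, i.e., the set of quintuples (a, b, c, d, e) of positive rational numbers satisfying a² + b² − (2s/r)ab = c², a² + d² + (2s/r)ad = e², and a(b+d) = r·n, is infinite. -/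
theorem infinite_setOf_sq_mem_Ioo {a b : ℚ} (ha : 0 ≤ a) (hab : a < b) :
    {q : ℚ | 0 < q ∧ q ^ 2 ∈ Set.Ioo a b}.Infinite := by
  have hsqrt : √(a : ℝ) < √(b : ℝ) :=
    Real.sqrt_lt_sqrt (by exact_mod_cast ha) (by exact_mod_cast hab)
  obtain ⟨α, hα, hαb⟩ := exists_rat_btwn hsqrt
  obtain ⟨β, hαβ, hβ⟩ := exists_rat_btwn hαb
  refine (Set.Ioo_infinite (by exact_mod_cast hαβ)).mono fun q hqαβ => ?_
  obtain ⟨hαq, hqβ⟩ := hqαβ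
  have hαq' : (α : ℝ) < q := by exact_mod_cast hαq
  have hqβ' : (q : ℝ) < β := by exact_mod_cast hqβ
  have hq : (0 : ℝ) < q := (Real.sqrt_nonneg _).trans_lt (hα.trans hαq')
  have hlo : (a : ℝ) < (q : ℝ) ^ 2 := (Real.sqrt_lt' hq).1 (hα.trans hαq')
  have hhi : (q : ℝ) ^ 2 < b := (Real.lt_sqrt hq.le).1 (hqβ'.trans hβ)
  exact ⟨by exact_mod_cast hq, by exact_mod_cast hlo, by exact_mod_cast hhi⟩

theorem isEnvelope_of_sq_add_sq {r s : ℤ} {n : ℕ} {t h X Y c e : ℚ}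
    (hr : 0 < r) (hs : 0 ≤ s) (ht : 0 < t) (hpyth : (s : ℚ) ^ 2 + t ^ 2 = (r : ℚ) ^ 2)
    (hh : 0 < h) (hX : 0 < X) (hc : 0 < c) (he : 0 < e) (hY : h * (s / t) < Y)
    (hXc : X ^ 2 + h ^ 2 = c ^ 2) (hYe : Y ^ 2 + h ^ 2 = e ^ 2) (harea : h * (X + Y) = t * n) :
    IsEnvelope r s n (h * r / t) (X + h * (s / t)) c (Y - h * (s / t)) e := by
  have hr' : (0 : ℚ) < r := by exact_mod_cast hr
  have hs' : (0 : ℚ) ≤ s := by exact_mod_cast hs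
  refine ⟨by positivity, by positivity, hc, by linarith, he, ?_, ?_, ?_⟩
  · field_simp
    linear_combination (-h ^ 2) * hpyth + t ^ 2 * hXc
  · field_simp
    linear_combination (-h ^ 2) * hpyth + t ^ 2 * hYe
  · rw [show h * r / t * (X + h * (s / t) + (Y - h * (s / t))) = r / t * (h * (X + Y)) by ring,
      harea]
    field_simp

section RightTriangle

variable (h u : ℚ)

def baseLeg : ℚ := h * (1 - u ^ 2) / (2 * u)

def hypotenuse : ℚ := h * (1 + u ^ 2) / (2 * u)

variable {h u}

theorem baseLeg_sq_add_sq (hu : u ≠ 0) : baseLeg h u ^ 2 + h ^ 2 = hypotenuse h u ^ 2 := by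
  simp only [baseLeg, hypotenuse]
  field_simp
  ring

theorem mul_lt_baseLeg {k : ℚ} (hh : 0 < h) (hu : 0 < u) (hk : 0 ≤ k) (huk : u * (1 + 2 * k) < 1) :
    h * k < baseLeg h u := by
  rw [baseLeg, lt_div_iff₀ (by positivity)]
  have : 0 < u * (1 - u) := mul_pos hu (by nlinarith)
  nlinarith

theorem baseLeg_pos (hh : 0 < h) (hu : 0 < u) (hu1 : u < 1) : 0 < baseLeg h u := by
  simpa using mul_lt_baseLeg (k := 0) hh hu le_rfl (by simpa using hu1)

theorem hypotenuse_pos (hh : 0 < h) (hu : 0 < u) : 0 < hypotenuse h u := by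
  unfold hypotenuse
  positivity

end RightTriangle

section Family

variable (N q : ℚ)

def altitude : ℚ := 2 * q * (N + q ^ 2) * (N - q ^ 2) / (5 * q ^ 4 + 2 * N * q ^ 2 + N ^ 2)

def leftParam : ℚ := 2 * q ^ 2 / (N + q ^ 2)

def rightParam : ℚ := (N - q ^ 2) ^ 2 / (2 * (N + q ^ 2) ^ 2)

variable {N q}

theorem altitude_pos (hq : 0 < q) (hqN : q ^ 2 < N) : 0 < altitude N q := by
  have hF : 0 < N - q ^ 2 := by linarith
  have hN : 0 < N := (by positivity : 0 < q ^ 2).trans hqN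
  unfold altitude
  positivity

theorem leftParam_pos (hq : 0 < q) (hN : 0 < N) : 0 < leftParam N q := by
  unfold leftParam
  positivity

theorem leftParam_lt_one (hq : 0 < q) (hqN : q ^ 2 < N) : leftParam N q < 1 := by
  have hN : 0 < N := (by positivity : 0 < q ^ 2).trans hqN
  rw [leftParam, div_lt_one (by positivity)]
  linarith

theorem rightParam_pos (hq : 0 < q) (hqN : q ^ 2 < N) : 0 < rightParam N q := by
  have hF : 0 < N - q ^ 2 := by linarith
  have hN : 0 < N := (by positivity : 0 < q ^ 2).trans hqN
  unfold rightParam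
  positivity

theorem rightParam_mul_lt_one {k : ℚ} (hq : 0 < q) (hqN : q ^ 2 < N) (hk : 0 ≤ k)
    (hqk : N * k / (1 + k) < q ^ 2) : rightParam N q * (1 + 2 * k) < 1 := by
  have hF : 0 < N - q ^ 2 := by linarith
  have hN : 0 < N := (by positivity : 0 < q ^ 2).trans hqN
  have hFk : (N - q ^ 2) * (1 + k) < N := by
    rw [div_lt_iff₀ (by positivity)] at hqk
    linarith
  rw [rightParam, div_mul_eq_mul_div, div_lt_one (by positivity)]
  nlinarith [mul_lt_mul_of_pos_left hFk hF, sq_nonneg (N - q ^ 2), sq_nonneg q]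

theorem hypotenuse_altitude_leftParam (hq : 0 < q) (hN : 0 < N) :
    hypotenuse (altitude N q) (leftParam N q) = (N - q ^ 2) / (2 * q) := by
  simp only [hypotenuse, altitude, leftParam]
  field_simp
  ring

theorem altitude_mul_baseLeg_add (hq : 0 < q) (hqN : q ^ 2 < N) :
    altitude N q * (baseLeg (altitude N q) (leftParam N q) +
      baseLeg (altitude N q) (rightParam N q)) = N := by
  have : N - q ^ 2 ≠ 0 := by linarith
  have : 0 < N := (by positivity : 0 < q ^ 2).trans hqN
  simp only [altitude, leftParam, rightParam, baseLeg]
  field_simp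
  ring

end Family

def envelope (r s : ℤ) (t N q : ℚ) : ℚ × ℚ × ℚ × ℚ × ℚ :=
  let h := altitude N q
  (h * r / t, baseLeg h (leftParam N q) + h * (s / t), hypotenuse h (leftParam N q),
    baseLeg h (rightParam N q) - h * (s / t), hypotenuse h (rightParam N q))

theorem isEnvelope_envelope {r s : ℤ} {n : ℕ} {t q : ℚ} (hr : 0 < r) (hs : 0 ≤ s) (ht : 0 < t)
    (hpyth : (s : ℚ) ^ 2 + t ^ 2 = (r : ℚ) ^ 2) (hq : 0 < q)
    (hqN : q ^ 2 ∈ Set.Ioo (t * n * (s / t) / (1 + s / t)) (t * n)) :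
    let x := envelope r s t (t * n) q
    IsEnvelope r s n x.1 x.2.1 x.2.2.1 x.2.2.2.1 x.2.2.2.2 := by
  have hk : (0 : ℚ) ≤ s / t := div_nonneg (by exact_mod_cast hs) ht.le
  have hN : 0 < (t * n : ℚ) := by nlinarith [hqN.2, sq_nonneg q]
  have hh := altitude_pos hq hqN.2
  have hu := leftParam_pos hq hN
  have hv := rightParam_pos hq hqN.2
  exact isEnvelope_of_sq_add_sq hr hs ht hpyth hh (baseLeg_pos hh hu (leftParam_lt_one hq hqN.2))
    (hypotenuse_pos hh hu) (hypotenuse_pos hh hv)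
    (mul_lt_baseLeg hh hv hk (rightParam_mul_lt_one hq hqN.2 hk hqN.1))
    (baseLeg_sq_add_sq hu.ne') (baseLeg_sq_add_sq hv.ne') (altitude_mul_baseLeg_add hq hqN.2)

theorem injOn_envelope (r s : ℤ) (t : ℚ) {N : ℚ} (hN : 0 < N) :
    Set.InjOn (envelope r s t N) (Set.Ioi 0) := by
  intro p (hp : 0 < p) q (hq : 0 < q) hpq
  have hc := congrArg (fun x : ℚ × ℚ × ℚ × ℚ × ℚ => x.2.2.1) hpq
  simp only [envelope, hypotenuse_altitude_leftParam hp hN, hypotenuse_altitude_leftParam hq hN]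
    at hc
  field_simp at hc
  have : (q - p) * (N + p * q) = 0 := by linear_combination hc
  rcases mul_eq_zero.1 this with h | h
  · linarith
  · nlinarith [mul_pos hp hq]

theorem stmt_16_general (r s : ℤ) (hs : 0 ≤ s) (hsr : s < r)
    (t : ℕ) (ht : 0 < t) (hpyth : r ^ 2 - s ^ 2 = (t : ℤ) ^ 2) :
    ∀ n : ℕ, 0 < n →
      {x : ℚ × ℚ × ℚ × ℚ × ℚ |
        IsEnvelope r s n x.1 x.2.1 x.2.2.1 x.2.2.2.1 x.2.2.2.2}.Infinite := by
  intro n hn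
  have ht' : (0 : ℚ) < t := by exact_mod_cast ht
  have hN : (0 : ℚ) < t * n := by positivity
  have hk : (0 : ℚ) ≤ s / t := div_nonneg (by exact_mod_cast hs) ht'.le
  have hpyth' : (s : ℚ) ^ 2 + (t : ℚ) ^ 2 = (r : ℚ) ^ 2 := by
    have : (r : ℚ) ^ 2 - (s : ℚ) ^ 2 = (t : ℚ) ^ 2 := by exact_mod_cast hpyth
    linarith
  refine Set.infinite_of_injOn_mapsTo ((injOn_envelope r s t hN).mono fun q hq => hq.1)
    (fun q hq => isEnvelope_envelope (hs.trans_lt hsr) hs ht' hpyth' hq.1 hq.2)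
    (infinite_setOf_sq_mem_Ioo (by positivity) ?_)
  rw [div_lt_iff₀ (by positivity)]
  nlinarith

theorem stmt_16 (r s : ℤ) (hrs : IsCoprime r s) (hs : 0 ≤ s) (hsr : s < r)
    (t : ℕ) (ht : 0 < t) (hpyth : r ^ 2 - s ^ 2 = (t : ℤ) ^ 2) :
    ∀ n : ℕ, 0 < n →
      {x : ℚ × ℚ × ℚ × ℚ × ℚ |
        IsEnvelope r s n x.1 x.2.1 x.2.2.1 x.2.2.2.1 x.2.2.2.2}.Infinite :=
  stmt_16_general r s hs hsr t ht hpyth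
end

section
/- Let r, s be coprime integers with 0 ≤ s < r and suppose θ is a Pythagorean angle, i.e., r² − s² = t² for some positive integer t. Then for every positive integer n, the set of rational numbers m ≥ 1 such that n ∈ N_{θ,m} (i.e., n admits a θ-parallelogram envelope with ratio m) is infinite. -/
/-!
Put `a = r k`. Dropping the altitude `t k` of the parallelogram onto the line of `b`, its foot
splits `b` as `s k + t k α`, and then `c = t k √(α² + 1)`; likewise `d = t k β - s k` and
`e = t k √(β² + 1)`. So an envelope with ratio `m = (t β - s) / (t α + s)` is the same as a pair
`α, β > 0` with `α² + 1` and `β² + 1` rational squares and `n t (α + β)` a rational square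
(the area condition fixes `k`). The first condition is solved by `α = sinh (log p)`,
`β = sinh (log q)` with rational `p, q > 1`, and an explicit one-parameter choice of `p, q`
makes `α + β = N w²` for every rational `N > 1`. Taking `N = n t j²`, `α` stays bounded while
`β ≈ N / 4` grows, so the ratios are unbounded.
-/

/-- `sinh (log p)`, written rationally. -/
def sinhLog (p : ℚ) : ℚ := (p - p⁻¹) / 2

theorem sinhLog_sq_add_one {p : ℚ} (hp : p ≠ 0) : sinhLog p ^ 2 + 1 = ((p + p⁻¹) / 2) ^ 2 := by
  unfold sinhLog
  field_simp
  ring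

theorem sinhLog_pos {p : ℚ} (hp : 1 < p) : 0 < sinhLog p := by
  have : p⁻¹ < 1 := inv_lt_one_of_one_lt₀ hp
  unfold sinhLog
  linarith

theorem sinhLog_lt_half {p : ℚ} (hp : 0 < p) : sinhLog p < p / 2 := by
  have : 0 < p⁻¹ := inv_pos.2 hp
  unfold sinhLog
  linarith

theorem half_sub_one_le_sinhLog {p : ℚ} (hp : 1 ≤ p) : (p - 1) / 2 ≤ sinhLog p := by
  have : p⁻¹ ≤ 1 := inv_le_one_of_one_le₀ hp
  unfold sinhLog
  linarith

/-- With `p = 2 y²`, `y = (N + 1) / (N - 1)` and `q = (N + 1) / 2`, both `p + q` and `p q - 1`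
are multiples of `N² + 2 N + 5`, and `sinhLog p + sinhLog q = (p + q) (p q - 1) / (2 p q)`. -/
theorem sinhLog_add_sinhLog_eq_mul_sq {N : ℚ} (hN : 1 < N) :
    sinhLog (2 * ((N + 1) / (N - 1)) ^ 2) + sinhLog ((N + 1) / 2) =
      N * ((N ^ 2 + 2 * N + 5) / (2 * (N + 1) * (N - 1))) ^ 2 := by
  have h₁ : N - 1 ≠ 0 := by linarith
  have h₂ : N + 1 ≠ 0 := by linarith
  unfold sinhLog
  field_simp
  ring

theorem exists_sinhLog_add_sinhLog_eq_mul_sq {N : ℚ} (hN : 3 ≤ N) :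
    ∃ p q w : ℚ, 1 < p ∧ 1 < q ∧ 0 < w ∧ sinhLog p < 4 ∧ (N - 1) / 4 ≤ sinhLog q ∧
      sinhLog p + sinhLog q = N * w ^ 2 := by
  have hN1 : 0 < N - 1 := by linarith
  have hy : 1 < (N + 1) / (N - 1) := by rw [one_lt_div hN1]; linarith
  have hy2 : (N + 1) / (N - 1) ≤ 2 := by rw [div_le_iff₀ hN1]; linarith
  refine ⟨2 * ((N + 1) / (N - 1)) ^ 2, (N + 1) / 2, _, by nlinarith, by linarith, by positivity,
    ?_, ?_, sinhLog_add_sinhLog_eq_mul_sq (by linarith)⟩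
  · have : 2 * ((N + 1) / (N - 1)) ^ 2 ≤ 2 * 2 ^ 2 := by gcongr
    linarith [sinhLog_lt_half (p := 2 * ((N + 1) / (N - 1)) ^ 2) (by positivity)]
  · linarith [half_sub_one_le_sinhLog (p := (N + 1) / 2) (by linarith)]

theorem isEnvelope_of_sq_add_one {r s : ℤ} {n : ℕ} {t α β u v k : ℚ}
    (hpyth : (r : ℚ) ^ 2 - s ^ 2 = t ^ 2) (hr : 0 < r) (ht : 0 < t)
    (hu : 0 < u) (hv : 0 < v) (hk : 0 < k)
    (hα : α ^ 2 + 1 = u ^ 2) (hβ : β ^ 2 + 1 = v ^ 2)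
    (hb : 0 < t * α + s) (hd : 0 < t * β - s) (harea : k ^ 2 * t * (α + β) = n) :
    IsEnvelope r s n (r * k) (k * (t * α + s)) (t * k * u) (k * (t * β - s)) (t * k * v) := by
  have hr' : (0 : ℚ) < r := by exact_mod_cast hr
  have hcos : 2 * (s : ℚ) / r * (r * k) = 2 * s * k := by field_simp
  refine ⟨by positivity, by positivity, by positivity, by positivity, by positivity, ?_, ?_, ?_⟩
  · rw [hcos]
    linear_combination k ^ 2 * hpyth + k ^ 2 * t ^ 2 * hα
  · rw [hcos]
    linear_combination k ^ 2 * hpyth + k ^ 2 * t ^ 2 * hβ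
  · linear_combination (r : ℚ) * harea

theorem exists_pos_lt_mul_sq {c : ℚ} (hc : 0 < c) (B : ℚ) : ∃ j : ℚ, 0 < j ∧ B < c * j ^ 2 := by
  refine ⟨max 1 (B / c) + 1, by positivity, ?_⟩
  set j := max 1 (B / c) + 1
  have h₁ : 1 ≤ j := by linarith [le_max_left 1 (B / c)]
  have h₂ : B < c * j := by
    rw [← div_lt_iff₀' hc]
    linarith [le_max_right 1 (B / c)]
  nlinarith [mul_le_mul_of_nonneg_left h₁ (by positivity : 0 ≤ c * j)]

theorem exists_isEnvelope_ratio_gt {r s : ℤ} {t : ℚ} (hs : 0 ≤ s) (hr : 0 < r) (ht : 0 < t)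
    (hpyth : (r : ℚ) ^ 2 - s ^ 2 = t ^ 2) {n : ℕ} (hn : 0 < n) {C : ℚ} (hC : 0 ≤ C) :
    ∃ m, C < m ∧ ∃ a b c d e, IsEnvelope r s n a b c d e ∧ d = m * b := by
  have hs' : (0 : ℚ) ≤ s := by exact_mod_cast hs
  have hn' : (0 : ℚ) < n := by exact_mod_cast hn
  -- With `N = n t j²`, this bound gives `N ≥ 3` and `t (N - 1) / 4 > 4 C t + (C + 1) s`,
  -- which exceeds `C (t α + s) + s` since `α < 4`.
  obtain ⟨j, hj, hjN⟩ :=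
    exists_pos_lt_mul_sq (c := n * t ^ 2) (by positivity) (3 * t + 16 * C * t + 4 * (C + 1) * s)
  have htN : t * (n * t * j ^ 2) = n * t ^ 2 * j ^ 2 := by ring
  obtain ⟨p, q, w, hp, hq, hw, hα4, hβ, hsum⟩ :=
    exists_sinhLog_add_sinhLog_eq_mul_sq (N := n * t * j ^ 2) (by nlinarith)
  have hbpos : 0 < t * sinhLog p + s := by positivity [sinhLog_pos hp]
  have hratio : C * (t * sinhLog p + s) < t * sinhLog q - s := by
    nlinarith [mul_le_mul_of_nonneg_left hβ ht.le, mul_le_mul_of_nonneg_left hα4.le hC]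
  have hdpos : 0 < t * sinhLog q - s := lt_of_le_of_lt (by positivity) hratio
  refine ⟨(t * sinhLog q - s) / (t * sinhLog p + s), by rwa [lt_div_iff₀ hbpos], _, _, _, _, _,
    isEnvelope_of_sq_add_one (k := (t * j * w)⁻¹) hpyth hr ht (by positivity) (by positivity)
      (by positivity) (sinhLog_sq_add_one (by positivity)) (sinhLog_sq_add_one (by positivity))
      hbpos hdpos ?_, by field_simp⟩
  rw [hsum]
  field_simp

theorem stmt_17_general (r s : ℤ) (hs : 0 ≤ s) (hsr : s < r)
    (t : ℕ) (ht : 0 < t) (hpyth : r ^ 2 - s ^ 2 = (t : ℤ) ^ 2) :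
    ∀ n : ℕ, 0 < n →
      {m : ℚ | 1 ≤ m ∧ ∃ a b c d e : ℚ, IsEnvelope r s n a b c d e ∧ d = m * b}.Infinite := by
  intro n hn
  refine Set.infinite_of_not_bddAbove fun ⟨C, hC⟩ => ?_
  obtain ⟨m, hCm, hm⟩ := exists_isEnvelope_ratio_gt hs (hs.trans_lt hsr) (t := t)
    (by exact_mod_cast ht) (by exact_mod_cast hpyth) hn (zero_le_one.trans (le_max_right C 1))
  exact (hC ⟨(le_max_right C 1).trans hCm.le, hm⟩).not_gt ((le_max_left C 1).trans_lt hCm)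

theorem stmt_17 (r s : ℤ) (hrs : IsCoprime r s) (hs : 0 ≤ s) (hsr : s < r)
    (t : ℕ) (ht : 0 < t) (hpyth : r ^ 2 - s ^ 2 = (t : ℤ) ^ 2) :
    ∀ n : ℕ, 0 < n →
      {m : ℚ | 1 ≤ m ∧ ∃ a b c d e : ℚ, IsEnvelope r s n a b c d e ∧ d = m * b}.Infinite :=
  stmt_17_general r s hs hsr t ht hpyth
end

section
/- Let r, s be coprime integers with 0 ≤ s < r, let n be a positive integer, and let c, e, f be positive rational numbers satisfying the Heron relation 64n²(r²−s²) = (c+e+f)(c+e−f)(e+f−c)(c−e+f) (so that (c, e, f) are the sides of a rational triangle of area 2n√(r²−s²)). Define a = 4rn/f, b = (f² + c² − e²)/(2f) + (s/r)a, and d = (f² + e² − c²)/(2f) − (s/r)a. Then a² + b² − (2s/r)ab = c², a² + d² + (2s/r)ad = e², and a(b+d) = 4rn; in particular, if a, b, d are positive, then (a/2, b/2, c/2, d/2, e/2) is a θ-parallelogram envelope for n. -/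
section Field

variable {K : Type*} [Field K]

theorem sq_add_sq_sub_two_mul_mul_of_sq_mul_one_sub_sq {a p t c : K}
    (h : a ^ 2 * (1 - t ^ 2) + p ^ 2 = c ^ 2) :
    a ^ 2 + (p + t * a) ^ 2 - 2 * t * a * (p + t * a) = c ^ 2 := by
  linear_combination h

theorem sq_add_sq_add_two_mul_mul_of_sq_mul_one_sub_sq {a q t e : K}
    (h : a ^ 2 * (1 - t ^ 2) + q ^ 2 = e ^ 2) :
    a ^ 2 + (q - t * a) ^ 2 + 2 * t * a * (q - t * a) = e ^ 2 := by
  linear_combination h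

variable [CharZero K]

theorem altitude_sq_add_foot_sq_of_heron {r s n c e f : K} (hr : r ≠ 0) (hf : f ≠ 0)
    (heron : 64 * n ^ 2 * (r ^ 2 - s ^ 2) = (c + e + f) * (c + e - f) * (e + f - c) * (c - e + f)) :
    (4 * r * n / f) ^ 2 * (1 - (s / r) ^ 2) + ((f ^ 2 + c ^ 2 - e ^ 2) / (2 * f)) ^ 2 = c ^ 2 := by
  field_simp
  linear_combination heron

theorem foot_add_foot {c e f : K} (hf : f ≠ 0) :
    (f ^ 2 + c ^ 2 - e ^ 2) / (2 * f) + (f ^ 2 + e ^ 2 - c ^ 2) / (2 * f) = f := by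
  field_simp
  ring

end Field

theorem isEnvelope_half {r s : ℤ} {n : ℕ} {a b c d e : ℚ}
    (ha : 0 < a) (hb : 0 < b) (hc : 0 < c) (hd : 0 < d) (he : 0 < e)
    (hc2 : a ^ 2 + b ^ 2 - (2 * (s : ℚ) / (r : ℚ)) * a * b = c ^ 2)
    (he2 : a ^ 2 + d ^ 2 + (2 * (s : ℚ) / (r : ℚ)) * a * d = e ^ 2)
    (harea : a * (b + d) = 4 * (r : ℚ) * (n : ℚ)) :
    IsEnvelope r s n (a / 2) (b / 2) (c / 2) (d / 2) (e / 2) :=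
  ⟨by positivity, by positivity, by positivity, by positivity, by positivity,
    by linear_combination hc2 / 4, by linear_combination he2 / 4,
    by linear_combination harea / 4⟩

theorem stmt_18_general (r s : ℤ) (hs : 0 ≤ s) (hsr : s < r)
    (n : ℕ) (c e f : ℚ) (hc : 0 < c) (he : 0 < e) (hf : 0 < f)
    (heron : 64 * (n : ℚ) ^ 2 * ((r : ℚ) ^ 2 - (s : ℚ) ^ 2) =
      (c + e + f) * (c + e - f) * (e + f - c) * (c - e + f))
    (a b d : ℚ)
    (ha : a = 4 * (r : ℚ) * (n : ℚ) / f)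
    (hb : b = (f ^ 2 + c ^ 2 - e ^ 2) / (2 * f) + ((s : ℚ) / (r : ℚ)) * a)
    (hd : d = (f ^ 2 + e ^ 2 - c ^ 2) / (2 * f) - ((s : ℚ) / (r : ℚ)) * a) :
    a ^ 2 + b ^ 2 - (2 * (s : ℚ) / (r : ℚ)) * a * b = c ^ 2 ∧
    a ^ 2 + d ^ 2 + (2 * (s : ℚ) / (r : ℚ)) * a * d = e ^ 2 ∧
    a * (b + d) = 4 * (r : ℚ) * (n : ℚ) ∧
    (0 < a → 0 < b → 0 < d → IsEnvelope r s n (a / 2) (b / 2) (c / 2) (d / 2) (e / 2)) := by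
  have hr : (r : ℚ) ≠ 0 := by exact_mod_cast (hs.trans_lt hsr).ne'
  have heron_swap : 64 * (n : ℚ) ^ 2 * ((r : ℚ) ^ 2 - (s : ℚ) ^ 2) =
      (e + c + f) * (e + c - f) * (c + f - e) * (e - c + f) := by
    linear_combination heron
  subst ha hb hd
  have hc2 := sq_add_sq_sub_two_mul_mul_of_sq_mul_one_sub_sq
    (altitude_sq_add_foot_sq_of_heron hr hf.ne' heron)
  have he2 := sq_add_sq_add_two_mul_mul_of_sq_mul_one_sub_sq
    (altitude_sq_add_foot_sq_of_heron hr hf.ne' heron_swap)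
  have harea : 4 * (r : ℚ) * n / f * ((f ^ 2 + c ^ 2 - e ^ 2) / (2 * f) + s / r * (4 * r * n / f) +
      ((f ^ 2 + e ^ 2 - c ^ 2) / (2 * f) - s / r * (4 * r * n / f))) = 4 * r * n := by
    rw [add_add_sub_cancel, foot_add_foot hf.ne', div_mul_cancel₀ _ hf.ne']
  refine ⟨by linear_combination hc2, by linear_combination he2, harea, fun ha hb hd => ?_⟩
  exact isEnvelope_half ha hb hc hd he (by linear_combination hc2) (by linear_combination he2) harea

theorem stmt_18 (r s : ℤ) (hrs : IsCoprime r s) (hs : 0 ≤ s) (hsr : s < r)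
    (n : ℕ) (hn : 0 < n) (c e f : ℚ) (hc : 0 < c) (he : 0 < e) (hf : 0 < f)
    (heron : 64 * (n : ℚ) ^ 2 * ((r : ℚ) ^ 2 - (s : ℚ) ^ 2) =
      (c + e + f) * (c + e - f) * (e + f - c) * (c - e + f))
    (a b d : ℚ)
    (ha : a = 4 * (r : ℚ) * (n : ℚ) / f)
    (hb : b = (f ^ 2 + c ^ 2 - e ^ 2) / (2 * f) + ((s : ℚ) / (r : ℚ)) * a)
    (hd : d = (f ^ 2 + e ^ 2 - c ^ 2) / (2 * f) - ((s : ℚ) / (r : ℚ)) * a) :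
    a ^ 2 + b ^ 2 - (2 * (s : ℚ) / (r : ℚ)) * a * b = c ^ 2 ∧
    a ^ 2 + d ^ 2 + (2 * (s : ℚ) / (r : ℚ)) * a * d = e ^ 2 ∧
    a * (b + d) = 4 * (r : ℚ) * (n : ℚ) ∧
    (0 < a → 0 < b → 0 < d → IsEnvelope r s n (a / 2) (b / 2) (c / 2) (d / 2) (e / 2)) :=
  stmt_18_general r s hs hsr n c e f hc he hf heron a b d ha hb hd
end
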